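/- If β = (β_1,…,β_{r+1}) ∈ ℤ^{r+1} satisfies β_i = β_{i+1} + 1 for some 1 ≤ i ≤ r, then D_i(x^β) = 0. -/

import Mathlib

/-!
If `β_i = β_{i+1} + 1`, the Chinta–Gunnells formula for `σ_i(x^β)` collapses: `r_n(-1) = n - 1`
and `g_0 = -1` turn its bracket into `x^{(1-n)α_i} (1 - v x^{nα_i})`, which cancels the
denominator. Hence `σ_i(x^β) = x^β x^{-nα_i}`, and the numerator `x^β - x^{nα_i} σ_i(x^β)` of
`D_i(x^β)` vanishes.
-/

open scoped BigOperators Classical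
open Fin.NatCast

noncomputable section

namespace MetaPaper

variable (F : Type) [Field F]

/-- The field of rational functions in `x_1, …, x_{r+1}` over `F`. -/
abbrev K (r : ℕ) : Type := FractionRing (MvPolynomial (Fin (r+1)) F)

variable (r : ℕ)

/-- The variable `x_i` as an element of `K`. -/
def XX (i : Fin (r+1)) : K F r :=
  algebraMap (MvPolynomial (Fin (r+1)) F) (K F r) (MvPolynomial.X i)

/-- A constant from `F` as an element of `K`. -/
def CC (c : F) : K F r :=
  algebraMap (MvPolynomial (Fin (r+1)) F) (K F r) (MvPolynomial.C c)

/-- The monomial `x^λ = x_1^{λ_1} ⋯ x_{r+1}^{λ_{r+1}}`. -/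
def mon (lam : Fin (r+1) → ℤ) : K F r := ∏ i, XX F r i ^ lam i

/-- The simple reflection `σ_{i+1}` (0-indexed: swapping coordinates `i` and `i+1`). -/
def sref (i : ℕ) : Equiv.Perm (Fin (r+1)) :=
  Equiv.swap ((i : Fin (r+1))) (((i+1 : ℕ) : Fin (r+1)))

/-- The product of the simple reflections indexed by a word. -/
def wordProd (l : List ℕ) : Equiv.Perm (Fin (r+1)) := (l.map (sref r)).prod

/-- The (Coxeter) length of a permutation: the least length of a word in the
simple reflections representing it. -/
def plen (u : Equiv.Perm (Fin (r+1))) : ℕ :=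
  sInf {m | ∃ l : List ℕ, (∀ i ∈ l, i < r) ∧ l.length = m ∧ wordProd r l = u}

/-- The strong Bruhat order: `u ≤ w` iff `u` is the product of a subword of a
reduced word for `w`. -/
def BruhatLE (u w : Equiv.Perm (Fin (r+1))) : Prop :=
  ∃ l : List ℕ, (∀ i ∈ l, i < r) ∧ wordProd r l = w ∧ l.length = plen r w ∧
    ∃ l' : List ℕ, l'.Sublist l ∧ wordProd r l' = u

/-- The favourite reduced word `σ_1, σ_2 σ_1, σ_3 σ_2 σ_1, …` (0-indexed) for the
longest element of `S_{m+1}`. -/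
def favWord (m : ℕ) : List ℕ := (List.range m).flatMap (fun b => (List.range (b+1)).reverse)

/-- `x^{α_i} = x_i / x_{i+1}` (0-indexed `i`). -/
def xalpha (i : ℕ) : K F r := XX F r (i : Fin (r+1)) / XX F r ((i+1 : ℕ) : Fin (r+1))

/-- The sublattice `Λ₀` of exponent vectors whose coordinates are all congruent mod `n`. -/
def Lam0 (n : ℕ) : Set (Fin (r+1) → ℤ) := {lam | ∀ i j, (n : ℤ) ∣ lam i - lam j}

/-- The subfield `K₀` of `K` generated by the monomials `x^λ` with `λ ∈ Λ₀`. -/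
def K0 (n : ℕ) : Subfield (K F r) :=
  Subfield.closure {x | ∃ lam ∈ Lam0 r n, x = mon F r lam}

variable (n : ℕ) (v : F) (g : ℤ → F)

/-- Data of the metaplectic (Chinta–Gunnells) action of `W = S_{r+1}` on `K`,
together with the ordinary permutation action, and their defining properties. -/
structure Setup : Type where
  /-- the Chinta–Gunnells action -/
  act : Equiv.Perm (Fin (r+1)) → K F r → K F r
  /-- the ordinary permutation action on `K` -/
  perm : Equiv.Perm (Fin (r+1)) → K F r ≃+* K F r
  perm_X : ∀ w i, perm w (XX F r i) = XX F r (w i)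
  perm_const : ∀ w c, perm w (CC F r c) = CC F r c
  perm_one : ∀ f, perm 1 f = f
  perm_mul : ∀ u w f, perm (u * w) f = perm u (perm w f)
  act_one : ∀ f, act 1 f = f
  act_mul : ∀ u w f, act (u * w) f = act u (act w f)
  act_add : ∀ w f h, act w (f + h) = act w f + act w h
  act_const_mul : ∀ w c f, act w (CC F r c * f) = CC F r c * act w f
  act_simple : ∀ i : ℕ, i < r → ∀ lam : Fin (r+1) → ℤ,
    act (sref r i) (mon F r lam) =
      mon F r (fun j => lam (sref r i j)) / (1 - CC F r v * xalpha F r i ^ (n : ℕ)) *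
        (xalpha F r i ^ (-((lam (((i+1 : ℕ) : Fin (r+1))) - lam ((i : Fin (r+1)))) % (n : ℤ)))
            * (1 - CC F r v)
          - CC F r v * CC F r (g (1 + lam (((i+1 : ℕ) : Fin (r+1))) - lam ((i : Fin (r+1)))))
            * xalpha F r i ^ (1 - (n : ℤ)) * (1 - xalpha F r i ^ (n : ℕ)))
  act_K0 : ∀ i : ℕ, i < r → ∀ h f : K F r, h ∈ K0 F r n →
    act (sref r i) (h * f) = perm (sref r i) h * act (sref r i) f

variable {F r n v g}

/-- The metaplectic Demazure operator `D_i`. -/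
def Dem (S : Setup F r n v g) (i : ℕ) (f : K F r) : K F r :=
  (f - xalpha F r i ^ (n : ℕ) * S.act (sref r i) f) / (1 - xalpha F r i ^ (n : ℕ))

/-- The metaplectic Demazure–Lusztig operator `T_i`. -/
def DL (S : Setup F r n v g) (i : ℕ) (f : K F r) : K F r :=
  (1 - CC F r v * xalpha F r i ^ (n : ℕ)) * Dem S i f - f

/-- `D_{i_1} ⋯ D_{i_l}` for a word `[i_1, …, i_l]`. -/
def DWord (S : Setup F r n v g) : List ℕ → K F r → K F r
  | [] => fun f => f
  | i :: l => fun f => Dem S i (DWord S l f)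

/-- `T_{i_1} ⋯ T_{i_l}` for a word `[i_1, …, i_l]`. -/
def TWord (S : Setup F r n v g) : List ℕ → K F r → K F r
  | [] => fun f => f
  | i :: l => fun f => DL S i (TWord S l f)

/-- `D_u` for `u ∈ W`, via a chosen reduced word for `u` (by the braid relations
this does not depend on the choice). -/
def Dperm (S : Setup F r n v g) (u : Equiv.Perm (Fin (r+1))) : K F r → K F r :=
  if h : ∃ l : List ℕ, (∀ i ∈ l, i < r) ∧ l.length = plen r u ∧ wordProd r l = u
  then DWord S h.choose else id

/-- `T_u` for `u ∈ W`, via a chosen reduced word for `u`. -/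
def Tperm (S : Setup F r n v g) (u : Equiv.Perm (Fin (r+1))) : K F r → K F r :=
  if h : ∃ l : List ℕ, (∀ i ∈ l, i < r) ∧ l.length = plen r u ∧ wordProd r l = u
  then TWord S h.choose else id

variable (F r n v g)

/-- `a : ℕ → ℕ → ℤ` encodes a Gelfand–Tsetlin pattern of rank `m`
(entries `a i j`, `0 ≤ i ≤ j ≤ m`, zero outside this triangle). -/
def IsGT (m : ℕ) (a : ℕ → ℕ → ℤ) : Prop :=
  (∀ i j, (j < i ∨ m < j) → a i j = 0) ∧
  (∀ i j, i ≤ j → j ≤ m → 0 ≤ a i j) ∧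
  (∀ i j, 1 ≤ i → i ≤ j → j ≤ m → a i j ≤ a (i-1) (j-1) ∧ a (i-1) j ≤ a i j)

/-- `d_i`, the sum of the `i`-th row of a pattern. -/
def rowSum (m : ℕ) (a : ℕ → ℕ → ℤ) (i : ℕ) : ℤ := ∑ j ∈ Finset.Icc i m, a i j

/-- The `p`-th coordinate (0-indexed) of the weight `wt(T) = (d_m, d_{m-1}-d_m, …, d_0-d_1)`. -/
def wtN (m : ℕ) (a : ℕ → ℕ → ℤ) (p : ℕ) : ℤ := rowSum m a (m - p) - rowSum m a (m - p + 1)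

/-- The Γ-array of a pattern: `Γ_{i,j} = Σ_{k=j}^{m} (a_{i,k} - a_{i-1,k})`. -/
def GammaArr (m : ℕ) (a : ℕ → ℕ → ℤ) (i j : ℕ) : ℤ :=
  ∑ k ∈ Finset.Icc j m, (a i k - a (i-1) k)

/-- `h♭(a) = 1 - v` if `n ∣ a`, else `0`. -/
def hflat (a : ℤ) : F := if (n : ℤ) ∣ a then 1 - v else 0

/-- `g♭(a) = v · g_a`. -/
def gflat (a : ℤ) : F := v * g a

/-- The factor `g_{ij}(T)` of the degree-`n` Gelfand–Tsetlin coefficient. -/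
def gcoefP (m : ℕ) (a : ℕ → ℕ → ℤ) (i j : ℕ) : F :=
  if GammaArr m a i (j+1) = GammaArr m a i j ∧
      GammaArr m a i j < GammaArr m a i (j+1) + a (i-1) (j-1) - a (i-1) j then 1
  else if GammaArr m a i (j+1) < GammaArr m a i j ∧
      GammaArr m a i j < GammaArr m a i (j+1) + a (i-1) (j-1) - a (i-1) j then
    hflat F n v (GammaArr m a i j)
  else if GammaArr m a i (j+1) < GammaArr m a i j ∧
      GammaArr m a i j = GammaArr m a i (j+1) + a (i-1) (j-1) - a (i-1) j then
    gflat F v g (GammaArr m a i j)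
  else 0

/-- The degree-`n` Gelfand–Tsetlin coefficient `G^{(n)}(T)`. -/
def Gcoef (m : ℕ) (a : ℕ → ℕ → ℤ) : F :=
  ∏ i ∈ Finset.Icc 1 m, ∏ j ∈ Finset.Icc i m, gcoefP F n v g m a i j

/-- `Γ = (Γ_1, …, Γ_m)` (1-indexed, zero outside) is `ν`-admissible. -/
def IsAdm (m : ℕ) (ν Γ : ℕ → ℤ) : Prop :=
  (∀ j, j = 0 ∨ m < j → Γ j = 0) ∧
  ∀ j, 1 ≤ j → j ≤ m → Γ (j+1) ≤ Γ j ∧ Γ j ≤ Γ (j+1) + ν j - ν (j+1) + 1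

/-- `Γ` is `(ν,k)`-admissible. -/
def IsAdmK (m k : ℕ) (ν Γ : ℕ → ℤ) : Prop := IsAdm m ν Γ ∧ ∀ j, k + 1 < j → Γ j = 0

/-- The `p`-th coordinate (0-indexed) of
`wt^{(ν)}(Γ) = (ν_{m+1}+Γ_m, ν_m+Γ_{m-1}-Γ_m, …, ν_1-Γ_1)`. -/
def wtGam (m : ℕ) (ν Γ : ℕ → ℤ) (p : ℕ) : ℤ := ν (m+1-p) + Γ (m-p) - Γ (m-p+1)

/-- The factor `c_j` of `G_1^{(ν)}(Γ)`. -/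
def gamCoef (ν Γ : ℕ → ℤ) (j : ℕ) : F :=
  if Γ (j+1) = Γ j ∧ Γ j < Γ (j+1) + ν j - ν (j+1) + 1 then 1
  else if Γ (j+1) < Γ j ∧ Γ j < Γ (j+1) + ν j - ν (j+1) + 1 then hflat F n v (Γ j)
  else if Γ (j+1) < Γ j ∧ Γ j = Γ (j+1) + ν j - ν (j+1) + 1 then gflat F v g (Γ j)
  else 0

/-- `G_1^{(ν)}(Γ)`. -/
def G1 (m : ℕ) (ν Γ : ℕ → ℤ) : F := ∏ j ∈ Finset.Icc 1 m, gamCoef F n v g ν Γ j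

/-- The top row `λ + ρ` of a pattern, as a function `ℕ → ℤ` (0-indexed columns). -/
def topRowOf (lam : Fin (r+1) → ℤ) : ℕ → ℤ :=
  fun j => if h : j ≤ r then lam ⟨j, by omega⟩ + ((r : ℤ) - (j : ℤ)) else 0

/-- The weight `λ` reread as a 1-indexed function `ℕ → ℤ` (`ν_j = λ_j`). -/
def nuOf (lam : Fin (r+1) → ℤ) : ℕ → ℤ :=
  fun j => if h : 1 ≤ j ∧ j ≤ r + 1 then lam ⟨j - 1, by omega⟩ else 0

/-- Dominance: `λ_1 ≥ λ_2 ≥ … `. -/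
def Dominant (m : ℕ) (lam : Fin m → ℤ) : Prop := ∀ i j : Fin m, i ≤ j → lam j ≤ lam i

/-- Position of `Γ_{i,j}` in the reading `b_1, b_2, …` of the Γ-array
(rows bottom to top, each row left to right). -/
def bpos (m i j : ℕ) : ℕ := (m - i) * (m - i + 1) / 2 + (j - i + 1)


/-- `δ(A,B) = h♭(A)` if `A < B`, `h♭(A) - 1` if `A = B`, `0` if `A > B`. -/
def deltaHG (A B : ℤ) : F :=
  if A < B then hflat F n v A else if A = B then hflat F n v A - 1 else 0

variable {F r n v g}

lemma algebraMap_injective :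
    Function.Injective (algebraMap (MvPolynomial (Fin (r+1)) F) (K F r)) :=
  IsFractionRing.injective _ _

lemma XX_ne_zero (j : Fin (r+1)) : XX F r j ≠ 0 :=
  (map_ne_zero_iff _ algebraMap_injective).mpr (MvPolynomial.X_ne_zero j)

lemma mon_add (lam mu : Fin (r+1) → ℤ) : mon F r (lam + mu) = mon F r lam * mon F r mu := by
  simp only [mon, Pi.add_apply, ← Finset.prod_mul_distrib]
  exact Finset.prod_congr rfl fun j _ => zpow_add₀ (XX_ne_zero j) _ _

lemma mon_single (p : Fin (r+1)) (c : ℤ) : mon F r (Pi.single p c) = XX F r p ^ c := by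
  rw [mon, Finset.prod_eq_single p (fun j _ hj => by simp [hj]) (by simp)]
  simp

lemma mon_comp_swap (lam : Fin (r+1) → ℤ) {p q : Fin (r+1)} (hpq : p ≠ q) :
    mon F r (fun j => lam (Equiv.swap p q j)) =
      mon F r lam * (XX F r q / XX F r p) ^ (lam p - lam q) := by
  have hexp : (fun j => lam (Equiv.swap p q j)) =
      lam + Pi.single q (lam p - lam q) + Pi.single p (lam q - lam p) := by
    funext j
    rcases eq_or_ne j p with rfl | hjp
    · simp [hpq]
    rcases eq_or_ne j q with rfl | hjq
    · simp [hpq.symm]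
    simp [Equiv.swap_apply_of_ne_of_ne hjp hjq, hjp, hjq]
  rw [hexp, mon_add, mon_add, mon_single, mon_single, div_zpow,
    show lam q - lam p = -(lam p - lam q) by ring, zpow_neg, div_eq_mul_inv, mul_assoc]

lemma natCast_ne_natCast_succ {i : ℕ} (hi : i < r) :
    ((i : ℕ) : Fin (r+1)) ≠ ((i+1 : ℕ) : Fin (r+1)) := by
  rw [Ne, Fin.ext_iff, Fin.val_natCast, Fin.val_natCast, Nat.mod_eq_of_lt (by omega),
    Nat.mod_eq_of_lt (by omega)]
  omega

lemma xalpha_ne_zero (i : ℕ) : xalpha F r i ≠ 0 :=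
  div_ne_zero (XX_ne_zero _) (XX_ne_zero _)

/-- Clearing denominators gives `x_{i+1}^n - c x_i^n`, whose `x_{i+1}^n`-coefficient is `1`. -/
lemma one_sub_CC_mul_xalpha_pow_ne_zero (hn : 1 ≤ n) {i : ℕ} (hi : i < r) (c : F) :
    1 - CC F r c * xalpha F r i ^ n ≠ 0 := by
  set p : Fin (r+1) := ((i : ℕ) : Fin (r+1))
  set q : Fin (r+1) := ((i+1 : ℕ) : Fin (r+1))
  have hpq : p ≠ q := natCast_ne_natCast_succ hi
  have hq : XX F r q ^ n ≠ 0 := pow_ne_zero _ (XX_ne_zero q)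
  have hpoly : MvPolynomial.X q ^ n - MvPolynomial.C c * MvPolynomial.X p ^ n ≠ 0 := by
    intro h
    have hcoeff := congrArg (MvPolynomial.coeff (Finsupp.single q n)) h
    have hsingle : Finsupp.single p n ≠ Finsupp.single q n := by
      rw [Ne, Finsupp.single_left_inj (by omega)]
      exact hpq
    simp [MvPolynomial.coeff_X_pow, hsingle] at hcoeff
  have hfrac : 1 - CC F r c * xalpha F r i ^ n =
      (XX F r q ^ n - CC F r c * XX F r p ^ n) / XX F r q ^ n := by
    rw [show xalpha F r i = XX F r p / XX F r q from rfl, div_pow, eq_div_iff hq]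
    field_simp
  have hmap : XX F r q ^ n - CC F r c * XX F r p ^ n =
      algebraMap _ (K F r) (MvPolynomial.X q ^ n - MvPolynomial.C c * MvPolynomial.X p ^ n) := by
    simp only [XX, CC, map_sub, map_mul, map_pow]
  rw [hfrac, hmap]
  exact div_ne_zero ((map_ne_zero_iff _ algebraMap_injective).mpr hpoly) hq

lemma neg_one_emod_natCast (hn : 1 ≤ n) : (-1 : ℤ) % (n : ℤ) = n - 1 := by
  rw [← Int.add_mul_emod_self_left (-1) n 1, Int.emod_eq_of_lt (by omega) (by omega)]
  ring

lemma act_sref_mon_of_eq_add_one (S : Setup F r n v g) (hn : 1 ≤ n) (hg0 : g 0 = -1)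
    {i : ℕ} (hi : i < r) {β : Fin (r+1) → ℤ}
    (hβ : β ((i : ℕ) : Fin (r+1)) = β ((i+1 : ℕ) : Fin (r+1)) + 1) :
    S.act (sref r i) (mon F r β) = mon F r β * xalpha F r i ^ (-(n : ℤ)) := by
  have hD := one_sub_CC_mul_xalpha_pow_ne_zero hn hi v
  have ha := xalpha_ne_zero (F := F) (r := r) i
  have hexp : -((β ((i+1 : ℕ) : Fin (r+1)) - β ((i : ℕ) : Fin (r+1))) % (n : ℤ)) = 1 - n := by
    rw [show β ((i+1 : ℕ) : Fin (r+1)) - β ((i : ℕ) : Fin (r+1)) = -1 by omega,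
      neg_one_emod_natCast hn]
    ring
  have hg : g (1 + β ((i+1 : ℕ) : Fin (r+1)) - β ((i : ℕ) : Fin (r+1))) = -1 := by
    rw [show 1 + β ((i+1 : ℕ) : Fin (r+1)) - β ((i : ℕ) : Fin (r+1)) = 0 by omega, hg0]
  have hCC : CC F r (-1) = -1 := by simp [CC]
  have hmon : mon F r (fun j => β (sref r i j)) = mon F r β * (xalpha F r i)⁻¹ := by
    rw [sref, mon_comp_swap β (natCast_ne_natCast_succ hi), hβ, add_sub_cancel_left, zpow_one,
      xalpha, inv_div]
  rw [S.act_simple i hi β, hexp, hg, hCC, hmon, zpow_neg, zpow_sub₀ ha, zpow_one, zpow_natCast]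
  field_simp
  ring

theorem statement7_general (r n : ℕ) (hn : 1 ≤ n) (v : ℂ) (g : ℤ → ℂ)
    (hg0 : g 0 = -1)
    (S : Setup ℂ r n v g) :
    ∀ i : ℕ, i < r → ∀ β : Fin (r+1) → ℤ,
      β ((i : ℕ) : Fin (r+1)) = β ((i+1 : ℕ) : Fin (r+1)) + 1 →
      Dem S i (mon ℂ r β) = 0 := by
  intro i hi β hβ
  rw [Dem, act_sref_mon_of_eq_add_one S hn hg0 hi hβ, zpow_neg, zpow_natCast, mul_left_comm,
    mul_inv_cancel₀ (pow_ne_zero n (xalpha_ne_zero i)), mul_one, sub_self, zero_div]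

/-- if `β_i = β_{i+1} + 1` then `D_i(x^β) = 0`. -/
theorem statement7 (r n : ℕ) (hr : 1 ≤ r) (hn : 1 ≤ n) (v : ℂ) (g : ℤ → ℂ)
    (hv : v ≠ 0)
    (hgper : ∀ i j : ℤ, i % (n : ℤ) = j % (n : ℤ) → g i = g j)
    (hg0 : g 0 = -1)
    (hginv : ∀ i : ℤ, 1 ≤ i → i ≤ (n : ℤ) - 1 → g i * g ((n : ℤ) - i) = v⁻¹)
    (S : Setup ℂ r n v g) :
    ∀ i : ℕ, i < r → ∀ β : Fin (r+1) → ℤ,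
      β ((i : ℕ) : Fin (r+1)) = β ((i+1 : ℕ) : Fin (r+1)) + 1 →
      Dem S i (mon ℂ r β) = 0 :=
  statement7_general r n hn v g hg0 S

end MetaPaper
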